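/- Let P, m, n, t be positive integers, let A ∈ ℂ^{mP×nP} be partitioned into P×P blocks A_{ij} ∈ ℂ^{m×n}, and for each i, j let U_{ij} ∈ ℂ^{m×t}, V_{ij} ∈ ℂ^{n×t}. With U, Σ, V the block-diagonal and switch matrices constructed from the U_{ij}, V_{ij} as in the butterfly factorization, the approximation error satisfies ‖A − UΣV^*‖_F² = Σ_{i,j=0}^{P−1} ‖A_{ij} − U_{ij}V_{ij}^*‖_F². Consequently, if ‖A_{ij} − U_{ij}V_{ij}^*‖_F ≤ ε for every i, j, then ‖A − UΣV^*‖_F ≤ Pε. -/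

import Mathlib

/-!
The `(i, j)` block of `UΣV^*` is `U_{ij}V_{ij}^*`: the block-diagonal `U` selects the `i`-th
block row of `Σ`, whose identity in the transposed position `(j, i)` pairs `U_{ij}` with the
block of `V^*` holding `V_{ij}^*`. The squared Frobenius norm is the sum of those of the blocks
of any block partition, which gives the identity; bounding each of the `P²` terms by `ε²` gives
the estimate.
-/

open Matrix

/-- The Frobenius norm of a complex matrix. -/
noncomputable def frob {α β : Type*} [Fintype α] [Fintype β] (M : Matrix α β ℂ) : ℝ :=
  Real.sqrt (∑ p, ∑ q, ‖M p q‖ ^ 2)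

lemma frob_sq {α β : Type*} [Fintype α] [Fintype β] (M : Matrix α β ℂ) :
    frob M ^ 2 = ∑ p, ∑ q, ‖M p q‖ ^ 2 := by
  unfold frob
  rw [Real.sq_sqrt]
  positivity

lemma frob_nonneg {α β : Type*} [Fintype α] [Fintype β] (M : Matrix α β ℂ) : 0 ≤ frob M :=
  Real.sqrt_nonneg _

section Blocks

variable {ι κ α β : Type*} [Fintype ι] [Fintype κ] [Fintype α] [Fintype β]

lemma frob_sq_eq_sum_frob_sq_submatrix (M : Matrix (ι × α) (κ × β) ℂ) :
    frob M ^ 2 = ∑ i, ∑ j, frob (M.submatrix (Prod.mk i) (Prod.mk j)) ^ 2 := by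
  simp only [frob_sq, submatrix_apply, Fintype.sum_prod_type]
  exact Finset.sum_congr rfl fun _ _ => Finset.sum_comm

lemma frob_le_card_mul_of_frob_submatrix_le (M : Matrix (ι × α) (ι × β) ℂ) {ε : ℝ}
    (hε : ∀ i j, frob (M.submatrix (Prod.mk i) (Prod.mk j)) ≤ ε) :
    frob M ≤ Fintype.card ι * ε := by
  rcases isEmpty_or_nonempty ι with _ | ⟨⟨i₀⟩⟩
  · simp [frob]
  have hε₀ : 0 ≤ ε := (frob_nonneg _).trans (hε i₀ i₀)
  refine abs_le_of_sq_le_sq' ?_ (by positivity) |>.2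
  calc frob M ^ 2 = ∑ i, ∑ j, frob (M.submatrix (Prod.mk i) (Prod.mk j)) ^ 2 :=
        frob_sq_eq_sum_frob_sq_submatrix M
    _ ≤ ∑ _i : ι, ∑ _j : ι, ε ^ 2 := by
        gcongr with i _ j _
        · exact frob_nonneg _
        · exact hε i j
    _ = (Fintype.card ι * ε) ^ 2 := by
        simp only [Finset.sum_const, Finset.card_univ, nsmul_eq_mul]
        ring

end Blocks

/-- The switch matrix `Σ`: it moves the `(i, j)` slot of `U`'s column index to the `(j, i)`
slot of `V`'s. -/
def switchMatrix (ι τ R : Type*) [DecidableEq ι] [DecidableEq τ] [Zero R] [One R] :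
    Matrix (ι × ι × τ) (ι × ι × τ) R :=
  Matrix.of fun p q => if p.2.1 = q.1 ∧ q.2.1 = p.1 ∧ p.2.2 = q.2.2 then 1 else 0

section Butterfly

variable {ι α β τ R : Type*} [DecidableEq ι]

/-- The block-diagonal factor `U` whose `i`-th diagonal block is `[U_{i0}, …, U_{i(P-1)}]`. -/
def butterflyU [Zero R] (Ublk : ι → ι → Matrix α τ R) : Matrix (ι × α) (ι × ι × τ) R :=
  Matrix.of fun p q => if p.1 = q.1 then Ublk p.1 q.2.1 p.2 q.2.2 else 0

/-- The block-diagonal factor `V` whose `j`-th diagonal block is `[V_{0j}, …, V_{(P-1)j}]`. -/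
def butterflyV [Zero R] (Vblk : ι → ι → Matrix β τ R) : Matrix (ι × β) (ι × ι × τ) R :=
  Matrix.of fun p q => if p.1 = q.1 then Vblk q.2.1 p.1 p.2 q.2.2 else 0

lemma submatrix_butterflyU_mul_switchMatrix_mul_conjTranspose_butterflyV [Fintype ι]
    [Fintype τ] [DecidableEq τ] [Semiring R] [StarRing R]
    (Ublk : ι → ι → Matrix α τ R) (Vblk : ι → ι → Matrix β τ R) (i j : ι) :
    (butterflyU Ublk * switchMatrix ι τ R * (butterflyV Vblk)ᴴ).submatrix
      (Prod.mk i) (Prod.mk j) = Ublk i j * (Vblk i j)ᴴ := by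
  ext a b
  simp [butterflyU, butterflyV, switchMatrix, mul_apply, Fintype.sum_prod_type, ite_and,
    apply_ite star]

end Butterfly

theorem butterfly_frobenius_error_general (P m n t : ℕ)
    (A : Matrix (Fin P × Fin m) (Fin P × Fin n) ℂ)
    (Ablk : Fin P → Fin P → Matrix (Fin m) (Fin n) ℂ)
    (hA : ∀ (i j : Fin P) (a : Fin m) (b : Fin n), Ablk i j a b = A (i, a) (j, b))
    (Ublk : Fin P → Fin P → Matrix (Fin m) (Fin t) ℂ)
    (Vblk : Fin P → Fin P → Matrix (Fin n) (Fin t) ℂ)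
    (U : Matrix (Fin P × Fin m) (Fin P × Fin P × Fin t) ℂ)
    (hU : U = Matrix.of fun p q => if p.1 = q.1 then Ublk p.1 q.2.1 p.2 q.2.2 else 0)
    (V : Matrix (Fin P × Fin n) (Fin P × Fin P × Fin t) ℂ)
    (hV : V = Matrix.of fun p q => if p.1 = q.1 then Vblk q.2.1 p.1 p.2 q.2.2 else 0)
    (Sw : Matrix (Fin P × Fin P × Fin t) (Fin P × Fin P × Fin t) ℂ)
    (hSw : Sw = Matrix.of fun p q =>
      if p.2.1 = q.1 ∧ q.2.1 = p.1 ∧ p.2.2 = q.2.2 then 1 else 0) :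
    frob (A - U * Sw * Vᴴ) ^ 2 =
        ∑ i : Fin P, ∑ j : Fin P, frob (Ablk i j - Ublk i j * (Vblk i j)ᴴ) ^ 2 ∧
      ∀ ε : ℝ, (∀ i j : Fin P, frob (Ablk i j - Ublk i j * (Vblk i j)ᴴ) ≤ ε) →
        frob (A - U * Sw * Vᴴ) ≤ P * ε := by
  have hUSV : U * Sw * Vᴴ =
      butterflyU Ublk * switchMatrix (Fin P) (Fin t) ℂ * (butterflyV Vblk)ᴴ := by
    subst hU hV hSw
    rfl
  have hblock : ∀ i j, (A - U * Sw * Vᴴ).submatrix (Prod.mk i) (Prod.mk j) =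
      Ablk i j - Ublk i j * (Vblk i j)ᴴ := by
    intro i j
    rw [submatrix_sub, Pi.sub_apply, Pi.sub_apply, hUSV,
      submatrix_butterflyU_mul_switchMatrix_mul_conjTranspose_butterflyV]
    congr 1
    ext a b
    exact (hA i j a b).symm
  refine ⟨by simp only [frob_sq_eq_sum_frob_sq_submatrix, hblock], fun ε hε => ?_⟩
  simpa using frob_le_card_mul_of_frob_submatrix_le (A - U * Sw * Vᴴ) (ε := ε)
    fun i j => (hblock i j).symm ▸ hε i j

/-- Blockwise low-rank approximation error for the butterfly factorization: with `U`, `Σ`,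
`V` the block-diagonal and switch matrices built from the blocks `U_{ij}, V_{ij}`,
`‖A − UΣV^*‖_F² = Σ_{i,j} ‖A_{ij} − U_{ij}V_{ij}^*‖_F²`; consequently, if every block
error satisfies `‖A_{ij} − U_{ij}V_{ij}^*‖_F ≤ ε`, then `‖A − UΣV^*‖_F ≤ Pε`. -/
theorem butterfly_frobenius_error (P m n t : ℕ)
    (hP : 0 < P) (hm : 0 < m) (hn : 0 < n) (ht : 0 < t)
    (A : Matrix (Fin P × Fin m) (Fin P × Fin n) ℂ)
    (Ablk : Fin P → Fin P → Matrix (Fin m) (Fin n) ℂ)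
    (hA : ∀ (i j : Fin P) (a : Fin m) (b : Fin n), Ablk i j a b = A (i, a) (j, b))
    (Ublk : Fin P → Fin P → Matrix (Fin m) (Fin t) ℂ)
    (Vblk : Fin P → Fin P → Matrix (Fin n) (Fin t) ℂ)
    (U : Matrix (Fin P × Fin m) (Fin P × Fin P × Fin t) ℂ)
    (hU : U = Matrix.of fun p q => if p.1 = q.1 then Ublk p.1 q.2.1 p.2 q.2.2 else 0)
    (V : Matrix (Fin P × Fin n) (Fin P × Fin P × Fin t) ℂ)
    (hV : V = Matrix.of fun p q => if p.1 = q.1 then Vblk q.2.1 p.1 p.2 q.2.2 else 0)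
    (Sw : Matrix (Fin P × Fin P × Fin t) (Fin P × Fin P × Fin t) ℂ)
    (hSw : Sw = Matrix.of fun p q =>
      if p.2.1 = q.1 ∧ q.2.1 = p.1 ∧ p.2.2 = q.2.2 then 1 else 0) :
    frob (A - U * Sw * Vᴴ) ^ 2 =
        ∑ i : Fin P, ∑ j : Fin P, frob (Ablk i j - Ublk i j * (Vblk i j)ᴴ) ^ 2 ∧
      ∀ ε : ℝ, (∀ i j : Fin P, frob (Ablk i j - Ublk i j * (Vblk i j)ᴴ) ≤ ε) →
        frob (A - U * Sw * Vᴴ) ≤ P * ε :=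
  butterfly_frobenius_error_general P m n t A Ablk hA Ublk Vblk U hU V hV Sw hSw
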